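/- Let α ∈ (0,1) and t > 0. Let y : [0,t] → ℝ be absolutely continuous with integrable derivative y′ such that g_{α/2} ∗ y′ ∈ L²(0,t). Then for every s ∈ [0,t], |y(s) − y(0)| ≤ (s^{(1−α)/2} / (Γ(1−α/2) · √(1−α))) · ‖g_{α/2} ∗ y′‖_{L²(0,s)}; in particular sup_{s∈[0,t]} |y(s) − y(0)| ≤ (t^{(1−α)/2} / (Γ(1−α/2) · √(1−α))) · ‖g_{α/2} ∗ y′‖_{L²(0,t)}. -/

import Mathlib

open MeasureTheory Real Set

/-- Laplace convolution on (0,t): (f ∗ g)(t) = ∫₀ᵗ f(t−s) g(s) ds. -/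
noncomputable def conv (f g : ℝ → ℝ) (t : ℝ) : ℝ := ∫ s in Set.Ioc 0 t, f (t - s) * g s

/-- Abel kernel g_α(t) = t^{α−1}/Γ(α). -/
noncomputable def abel (α t : ℝ) : ℝ := t ^ (α - 1) / Real.Gamma α

/-!
The Beta integral gives `g_a ∗ g_c = g_{a+c}`, in particular `g_{1-α/2} ∗ g_{α/2} = g_1 ≡ 1`, so by
Fubini `y(s) - y(0) = ∫₀ˢ y' = (g_{1-α/2} ∗ (g_{α/2} ∗ y'))(s)`. Cauchy–Schwarz bounds this by
`‖g_{1-α/2}‖_{L²(0,s)} ‖g_{α/2} ∗ y'‖_{L²(0,s)}`, and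
`‖g_{1-α/2}‖²_{L²(0,s)} = s^{1-α} / ((1-α) Γ(1-α/2)²)` is finite exactly because `α < 1`.
-/

theorem abs_integral_mul_le_sqrt_mul_sqrt {X : Type*} [MeasurableSpace X] {μ : Measure X}
    {f g : X → ℝ} (hf : MemLp f 2 μ) (hg : MemLp g 2 μ) :
    |∫ x, f x * g x ∂μ| ≤ √(∫ x, f x ^ 2 ∂μ) * √(∫ x, g x ^ 2 ∂μ) := by
  have h2 : ENNReal.ofReal 2 = 2 := by norm_num
  calc |∫ x, f x * g x ∂μ| ≤ ∫ x, ‖f x‖ * ‖g x‖ ∂μ := by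
        simpa only [norm_mul, norm_eq_abs] using norm_integral_le_integral_norm (fun x => f x * g x)
    _ ≤ (∫ x, ‖f x‖ ^ (2 : ℝ) ∂μ) ^ (1 / 2 : ℝ) * (∫ x, ‖g x‖ ^ (2 : ℝ) ∂μ) ^ (1 / 2 : ℝ) :=
        integral_mul_norm_le_Lp_mul_Lq .two_two (h2 ▸ hf) (h2 ▸ hg)
    _ = √(∫ x, f x ^ 2 ∂μ) * √(∫ x, g x ^ 2 ∂μ) := by
        simp only [sqrt_eq_rpow, rpow_two, norm_eq_abs, sq_abs]

section AbelKernel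

variable {a c b : ℝ}

theorem abel_one (x : ℝ) : abel 1 x = 1 := by simp [abel]

theorem abel_nonneg (ha : 0 ≤ a) {x : ℝ} (hx : 0 ≤ x) : 0 ≤ abel a x :=
  div_nonneg (rpow_nonneg hx _) (Gamma_nonneg_of_nonneg ha)

theorem measurable_abel (a : ℝ) : Measurable (abel a) := by
  unfold abel; fun_prop

theorem intervalIntegrable_abel_sub_mul_abel_half (a : ℝ) (hc : 0 < c) (hb : 0 < b) :
    IntervalIntegrable (fun w => abel a (b - w) * abel c w) volume 0 (b / 2) := by
  refine ((intervalIntegral.intervalIntegrable_rpow' (by linarith)).div_const _).continuousOn_mul ?_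
  refine (ContinuousOn.rpow_const (by fun_prop) fun w hw => Or.inl ?_).div_const _
  rw [uIcc_of_le (by linarith)] at hw
  linarith [hw.2]

theorem intervalIntegrable_abel_sub_mul_abel (ha : 0 < a) (hc : 0 < c) (hb : 0 < b) :
    IntervalIntegrable (fun w => abel a (b - w) * abel c w) volume 0 b := by
  have hright := (intervalIntegrable_abel_sub_mul_abel_half c ha hb).comp_sub_left b
  simp only [sub_sub_cancel, sub_zero, mul_comm (abel c _)] at hright
  rw [show b - b / 2 = b / 2 by ring] at hright
  exact (intervalIntegrable_abel_sub_mul_abel_half a hc hb).trans hright.symm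

theorem integral_sub_rpow_mul_rpow (ha : 0 < a) (hc : 0 < c) (hb : 0 < b) :
    ∫ w in 0..b, (b - w) ^ (a - 1) * w ^ (c - 1) =
      b ^ (a + c - 1) * (Gamma a * Gamma c / Gamma (a + c)) := by
  have hscaled := Complex.betaIntegral_scaled c a hb
  rw [Complex.betaIntegral_eq_Gamma_mul_div _ _ (by simpa) (by simpa)] at hscaled
  apply Complex.ofReal_injective
  push_cast [← intervalIntegral.integral_ofReal, ← Complex.Gamma_ofReal, Complex.ofReal_cpow hb.le]
  rw [add_comm (a : ℂ), mul_comm (Complex.Gamma a), ← hscaled]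
  refine intervalIntegral.integral_congr fun w hw => ?_
  rw [uIcc_of_le hb.le] at hw
  simp only [Complex.ofReal_cpow hw.1, Complex.ofReal_cpow (sub_nonneg.2 hw.2)]
  push_cast; ring

theorem integral_abel_sub_mul_abel (ha : 0 < a) (hc : 0 < c) (hb : 0 < b) :
    ∫ w in 0..b, abel a (b - w) * abel c w = abel (a + c) b := by
  simp only [abel, div_mul_div_comm, intervalIntegral.integral_div,
    integral_sub_rpow_mul_rpow ha hc hb]
  field_simp [(Gamma_pos_of_pos ha).ne', (Gamma_pos_of_pos hc).ne']

theorem integrable_indicator_abel_sub_mul_abel_sub (ha : 0 < a) (hc : 0 < c) {u s : ℝ}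
    (hu : u ∈ Ioo 0 s) :
    Integrable ((Ioi u).indicator fun r => abel a (s - r) * abel c (r - u))
      (volume.restrict (Ioc 0 s)) := by
  have h := (intervalIntegrable_abel_sub_mul_abel ha hc (sub_pos.2 hu.2)).comp_sub_right u
  simp only [zero_add, sub_add_cancel, sub_sub_sub_cancel_right] at h
  rw [integrable_indicator_iff measurableSet_Ioi, IntegrableOn,
    Measure.restrict_restrict measurableSet_Ioi, inter_comm, Ioc_inter_Ioi, max_eq_right hu.1.le]
  exact (intervalIntegrable_iff_integrableOn_Ioc_of_le hu.2.le).mp h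

theorem integral_indicator_abel_sub_mul_abel_sub (ha : 0 < a) (hc : 0 < c) {u s : ℝ}
    (hu : u ∈ Ioo 0 s) :
    ∫ r in Ioc 0 s, (Ioi u).indicator (fun r => abel a (s - r) * abel c (r - u)) r =
      abel (a + c) (s - u) := by
  have h := intervalIntegral.integral_comp_sub_right
    (fun w => abel a (s - u - w) * abel c w) (a := u) (b := s) u
  simp only [sub_self, sub_sub_sub_cancel_right] at h
  rw [setIntegral_indicator measurableSet_Ioi, Ioc_inter_Ioi, max_eq_right hu.1.le,
    ← intervalIntegral.integral_of_le hu.2.le, h,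
    integral_abel_sub_mul_abel ha hc (sub_pos.2 hu.2)]

theorem conv_abel_conv_abel (ha : 0 < a) (hc : 0 < c) {f : ℝ → ℝ} {s : ℝ}
    (hf : AEStronglyMeasurable f (volume.restrict (Ioc 0 s)))
    (hfw : IntegrableOn (fun u => abel (a + c) (s - u) * f u) (Ioc 0 s)) :
    conv (abel a) (conv (abel c) f) s = conv (abel (a + c)) f s := by
  set μ := volume.restrict (Ioc 0 s)
  have hμ : μ = volume.restrict (Ioo 0 s) := Measure.restrict_congr_set Ioo_ae_eq_Ioc.symm
  have hae : ∀ᵐ u ∂μ, u ∈ Ioo 0 s := hμ ▸ ae_restrict_mem measurableSet_Ioo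
  let G : ℝ → ℝ → ℝ := fun r u => (Ioi u).indicator (fun r => abel a (s - r) * abel c (r - u)) r
  have hG_nonneg : ∀ r ≤ s, ∀ u, 0 ≤ G r u := fun r hr u => indicator_apply_nonneg fun hu =>
    mul_nonneg (abel_nonneg ha.le (sub_nonneg.2 hr)) (abel_nonneg hc.le (sub_nonneg.2 hu.le))
  have hG_meas : Measurable (Function.uncurry G) :=
    Measurable.ite (measurableSet_lt measurable_snd measurable_fst)
      (((measurable_abel a).comp (measurable_const.sub measurable_fst)).mul
        ((measurable_abel c).comp (measurable_fst.sub measurable_snd))) measurable_const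
  have hint : Integrable (Function.uncurry fun r u => G r u * f u) (μ.prod μ) := by
    have hm : AEStronglyMeasurable (Function.uncurry fun r u => G r u * f u) (μ.prod μ) :=
      hG_meas.aestronglyMeasurable.mul hf.comp_snd
    refine (integrable_prod_iff' hm).2 ⟨?_, hfw.norm.congr ?_⟩
    · filter_upwards [hae] with u hu
      exact (integrable_indicator_abel_sub_mul_abel_sub ha hc hu).mul_const (f u)
    · filter_upwards [hae] with u hu
      have hnorm : ∀ᵐ r ∂μ, ‖G r u * f u‖ = G r u * ‖f u‖ := by
        filter_upwards [ae_restrict_mem measurableSet_Ioc] with r hr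
        rw [norm_mul, norm_of_nonneg (hG_nonneg r hr.2 u)]
      simp only [Function.uncurry_apply_pair]
      rw [integral_congr_ae hnorm, integral_mul_const,
        integral_indicator_abel_sub_mul_abel_sub ha hc hu, norm_mul,
        norm_of_nonneg (abel_nonneg (add_pos ha hc).le (sub_nonneg.2 hu.2.le))]
  have hinner : ∀ r ∈ Ioc 0 s, ∫ u, G r u * f u ∂μ = abel a (s - r) * conv (abel c) f r := by
    intro r hr
    have hG : (fun u => G r u * f u) =
        (Iio r).indicator (fun u => abel a (s - r) * (abel c (r - u) * f u)) := by
      ext u; simp only [G, indicator, mem_Ioi, mem_Iio]; split_ifs <;> ring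
    rw [hG, hμ, setIntegral_indicator measurableSet_Iio, Ioo_inter_Iio, min_eq_right hr.2,
      ← integral_Ioc_eq_integral_Ioo, integral_const_mul, conv]
  have houter : ∀ u ∈ Ioo 0 s, ∫ r, G r u * f u ∂μ = abel (a + c) (s - u) * f u := fun u hu => by
    rw [integral_mul_const, integral_indicator_abel_sub_mul_abel_sub ha hc hu]
  calc conv (abel a) (conv (abel c) f) s = ∫ r, ∫ u, G r u * f u ∂μ ∂μ :=
        (setIntegral_congr_fun measurableSet_Ioc hinner).symm
    _ = ∫ u, ∫ r, G r u * f u ∂μ ∂μ := integral_integral_swap hint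
    _ = conv (abel (a + c)) f s := integral_congr_ae (by filter_upwards [hae] using houter)

theorem conv_abel_one (f : ℝ → ℝ) (s : ℝ) : conv (abel 1) f s = ∫ r in Ioc 0 s, f r := by
  simp [conv, abel_one]

theorem abel_sq {x : ℝ} (hx : 0 ≤ x) : abel c x ^ 2 = x ^ (2 * c - 2) / Gamma c ^ 2 := by
  rw [abel, div_pow, ← rpow_natCast, ← rpow_mul hx]
  ring_nf

theorem eqOn_abel_sub_sq (s : ℝ) :
    EqOn (fun r => abel c (s - r) ^ 2) (fun r => (s - r) ^ (2 * c - 2) / Gamma c ^ 2) (Ioc 0 s) :=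
  fun _ hr => abel_sq (sub_nonneg.2 hr.2)

theorem memLp_abel_sub (hc : 1 / 2 < c) (s : ℝ) :
    MemLp (fun r => abel c (s - r)) 2 (volume.restrict (Ioc 0 s)) := by
  have h := (intervalIntegral.intervalIntegrable_rpow' (a := s) (b := 0)
    (show -1 < 2 * c - 2 by linarith)).comp_sub_left s
  simp only [sub_self, sub_zero] at h
  refine (memLp_two_iff_integrable_sq
    ((measurable_abel c).comp (measurable_const.sub measurable_id)).aestronglyMeasurable).2 ?_
  exact IntegrableOn.congr_fun ((h.def'.mono_set Ioc_subset_uIoc).div_const _)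
    (eqOn_abel_sub_sq s).symm measurableSet_Ioc

theorem sqrt_integral_abel_sub_sq (hc : 1 / 2 < c) {s : ℝ} (hs : 0 ≤ s) :
    √(∫ r in Ioc 0 s, abel c (s - r) ^ 2) = s ^ (c - 1 / 2) / (Gamma c * √(2 * c - 1)) := by
  have hint : ∫ r in Ioc 0 s, (s - r) ^ (2 * c - 2) = (s ^ (c - 1 / 2)) ^ 2 / (2 * c - 1) := by
    rw [← intervalIntegral.integral_of_le hs, intervalIntegral.integral_comp_sub_left
      (fun x => x ^ (2 * c - 2)), sub_self, sub_zero, integral_rpow (.inl (by linarith)),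
      zero_rpow (by linarith), ← rpow_natCast, ← rpow_mul hs]
    ring_nf
  rw [setIntegral_congr_fun measurableSet_Ioc (eqOn_abel_sub_sq s), integral_div, hint, div_div,
    sqrt_div' _ (mul_nonneg (by linarith) (sq_nonneg _)), sqrt_sq (rpow_nonneg hs _),
    sqrt_mul' _ (sq_nonneg _), sqrt_sq (Gamma_pos_of_pos (by linarith)).le, mul_comm]

end AbelKernel

theorem sup_bound_by_fractional_integral_general
    (α t : ℝ) (hα : α ∈ Set.Ioo (0:ℝ) 1) (y y' : ℝ → ℝ)
    (hy'int : IntegrableOn y' (Set.Ioc 0 t))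
    (hconvL2 : MemLp (conv (abel (α/2)) y') 2 (volume.restrict (Set.Ioc 0 t)))
    (hftc : ∀ s ∈ Set.Icc (0:ℝ) t, y s = y 0 + ∫ r in Set.Ioc 0 s, y' r) :
    (∀ s ∈ Set.Icc (0:ℝ) t,
      |y s - y 0| ≤ s ^ ((1 - α)/2) / (Real.Gamma (1 - α/2) * Real.sqrt (1 - α)) *
        Real.sqrt (∫ r in Set.Ioc 0 s, (conv (abel (α/2)) y' r)^2)) ∧
    (∀ s ∈ Set.Icc (0:ℝ) t,
      |y s - y 0| ≤ t ^ ((1 - α)/2) / (Real.Gamma (1 - α/2) * Real.sqrt (1 - α)) *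
        Real.sqrt (∫ r in Set.Ioc 0 t, (conv (abel (α/2)) y' r)^2)) := by
  obtain ⟨hα0, hα1⟩ := hα
  have hc : 1 / 2 < 1 - α / 2 := by linarith
  have hbound : ∀ s ∈ Icc (0:ℝ) t,
      |y s - y 0| ≤ s ^ ((1 - α)/2) / (Gamma (1 - α/2) * √(1 - α)) *
        √(∫ r in Ioc 0 s, (conv (abel (α/2)) y' r)^2) := by
    intro s hs
    have hsub : Ioc 0 s ⊆ Ioc 0 t := Ioc_subset_Ioc_right hs.2
    have hy's : IntegrableOn y' (Ioc 0 s) := hy'int.mono_set hsub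
    have hincr : y s - y 0 = conv (abel (1 - α / 2)) (conv (abel (α / 2)) y') s := by
      rw [conv_abel_conv_abel (by linarith) (by linarith) hy's.aestronglyMeasurable
        (by simpa [abel_one] using hy's), sub_add_cancel, conv_abel_one, hftc s hs,
        add_sub_cancel_left]
    calc |y s - y 0|
        ≤ √(∫ r in Ioc 0 s, abel (1 - α / 2) (s - r) ^ 2) *
            √(∫ r in Ioc 0 s, (conv (abel (α / 2)) y' r) ^ 2) := by
          rw [hincr]
          exact abs_integral_mul_le_sqrt_mul_sqrt (memLp_abel_sub hc s)
            (hconvL2.mono_measure (Measure.restrict_mono hsub le_rfl))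
      _ = _ := by
          rw [sqrt_integral_abel_sub_sq hc hs.1]
          ring_nf
  refine ⟨hbound, fun s hs => (hbound s hs).trans ?_⟩
  gcongr ?_ / _ * √?_
  · exact div_nonneg (rpow_nonneg (hs.1.trans hs.2) _)
      (mul_nonneg (Gamma_pos_of_pos (by linarith)).le (sqrt_nonneg _))
  · exact rpow_le_rpow hs.1 hs.2 (by linarith)
  · exact setIntegral_mono_set hconvL2.integrable_sq (ae_of_all _ fun r => sq_nonneg _)
      (Ioc_subset_Ioc_right hs.2).eventuallyLE

/-- Quantitative form of Lemma 2.2: for `α ∈ (0,1)` and `y` absolutely continuous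
with `g_{α/2} ∗ y' ∈ L²(0,t)`, for every `s ∈ [0,t]`,
`|y(s) − y(0)| ≤ s^{(1−α)/2} / (Γ(1−α/2) √(1−α)) ‖g_{α/2} ∗ y'‖_{L²(0,s)}`, and in
particular the sup over `[0,t]` is bounded by the corresponding `t`-based quantity. -/
theorem sup_bound_by_fractional_integral
    (α t : ℝ) (hα : α ∈ Set.Ioo (0:ℝ) 1) (ht : 0 < t) (y y' : ℝ → ℝ)
    (hy'int : IntegrableOn y' (Set.Ioc 0 t))
    (hconvL2 : MemLp (conv (abel (α/2)) y') 2 (volume.restrict (Set.Ioc 0 t)))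
    (hftc : ∀ s ∈ Set.Icc (0:ℝ) t, y s = y 0 + ∫ r in Set.Ioc 0 s, y' r) :
    (∀ s ∈ Set.Icc (0:ℝ) t,
      |y s - y 0| ≤ s ^ ((1 - α)/2) / (Real.Gamma (1 - α/2) * Real.sqrt (1 - α)) *
        Real.sqrt (∫ r in Set.Ioc 0 s, (conv (abel (α/2)) y' r)^2)) ∧
    (∀ s ∈ Set.Icc (0:ℝ) t,
      |y s - y 0| ≤ t ^ ((1 - α)/2) / (Real.Gamma (1 - α/2) * Real.sqrt (1 - α)) *
        Real.sqrt (∫ r in Set.Ioc 0 t, (conv (abel (α/2)) y' r)^2)) :=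
  sup_bound_by_fractional_integral_general α t hα y y' hy'int hconvL2 hftc
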